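/- arXiv:1705.02091 — 2 statements merged into one kernel-verified Lean document; each statement's English description precedes it below -/
import Mathlib

section
/- Consider the asymptotic state evolution recursion τ_0² = σ² + P and τ_t² = σ² + P(1 - x(τ_{t-1})), where x(τ) = ∑_{ℓ=1}^L (P_ℓ/P)·1{L P_ℓ > 2R τ² ln 2}. If the power allocation P_1 ≥ P_2 ≥ ... ≥ P_L > 0 with ∑ P_ℓ = P, and the recursion is run, then the sequence τ_t² is non-increasing in t. -/
/-- The asymptotic state-evolution recursion `τ_0² = σ² + P`,
`τ_t² = σ² + P(1 - x(τ_{t-1}))` with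
`x(τ) = ∑_ℓ (P_ℓ/P)·1{L P_ℓ > 2 R τ² ln 2}` produces a non-increasing
sequence of effective noise variances `τ_t²`. -/
theorem state_evolution_tausq_antitone
    (L : ℕ) (hL : 1 ≤ L) (σ2 P R : ℝ) (hσ2 : 0 < σ2) (hP : 0 < P) (hR : 0 < R)
    (Pℓ : Fin L → ℝ) (hpos : ∀ ℓ, 0 < Pℓ ℓ)
    (hmono : ∀ ℓ ℓ' : Fin L, ℓ ≤ ℓ' → Pℓ ℓ' ≤ Pℓ ℓ)
    (hsum : ∑ ℓ, Pℓ ℓ = P)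
    (x : ℝ → ℝ)
    (hx : ∀ τsq : ℝ, x τsq
        = ∑ ℓ, (Pℓ ℓ / P) * (if L * Pℓ ℓ > 2 * R * τsq * Real.log 2 then 1 else 0))
    (τsq : ℕ → ℝ)
    (h0 : τsq 0 = σ2 + P)
    (hrec : ∀ t : ℕ, τsq (t + 1) = σ2 + P * (1 - x (τsq t))) :
    Antitone τsq := by
  have hxnonneg : ∀ s : ℝ, 0 ≤ x s := by
    intro s
    rw [hx]
    apply Finset.sum_nonneg
    intro ℓ _
    apply mul_nonneg (div_nonneg (hpos ℓ).le hP.le)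
    positivity
  have hxmono : ∀ a b : ℝ, a ≤ b → x b ≤ x a := by
    intro a b hab
    rw [hx, hx]
    apply Finset.sum_le_sum
    intro ℓ _
    apply mul_le_mul_of_nonneg_left _ (div_nonneg (hpos ℓ).le hP.le)
    by_cases h : (L : ℝ) * Pℓ ℓ > 2 * R * b * Real.log 2
    · have h2 : (L : ℝ) * Pℓ ℓ > 2 * R * a * Real.log 2 := by
        have : 2 * R * a * Real.log 2 ≤ 2 * R * b * Real.log 2 := by
          have hlog : 0 < Real.log 2 := Real.log_pos (by norm_num)
          nlinarith [mul_nonneg (mul_nonneg hR.le (sub_nonneg.2 hab)) (Real.log_pos (by norm_num : (1:ℝ)<2)).le]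
        linarith
      simp [h, h2]
    · simp [h]
      positivity
  have key : ∀ t, τsq (t + 1) ≤ τsq t := by
    intro t
    induction t with
    | zero =>
      have e := hrec 0
      have hnn := hxnonneg (τsq 0)
      nlinarith [mul_nonneg hP.le hnn]
    | succ n ih =>
      have e1 := hrec n
      have e2 := hrec (n + 1)
      have hm := hxmono _ _ ih
      have := mul_le_mul_of_nonneg_left hm hP.le
      linarith
  exact antitone_nat_of_succ_le key
end

section
/- With the iterative allocation closed form τ²(b) = (σ² + P)(1 - 2R ln 2/B)^b, if R < C = (1/2)log₂(1 + P/σ²) then as B → ∞ the total power allocated after all B blocks, (σ²+P) - τ²(B) → (σ²+P)(1 - e^{-2R ln 2}) = (σ²+P)(1 - 2^{-2R}), is strictly less than P. -/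
open Filter

/-- As `B → ∞`, the iterative-allocation effective variance
`τ²(B) = (σ²+P)(1 - 2R ln 2/B)^B` tends to `(σ²+P)·2^{-2R}`, and the total
allocated power `(σ²+P)(1 - 2^{-2R})` is strictly less than `P` iff
`R < C = (1/2) log₂(1 + P/σ²)`. -/
theorem iterative_allocation_limit
    (σ2 P R : ℝ) (hσ2 : 0 < σ2) (hP : 0 < P) (hR : 0 < R) :
    Tendsto (fun B : ℕ => (σ2 + P) * (1 - 2 * R * Real.log 2 / B) ^ B)
        atTop (nhds ((σ2 + P) * (2 : ℝ) ^ (-(2 * R)))) ∧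
    ((σ2 + P) * (1 - (2 : ℝ) ^ (-(2 * R))) < P ↔
        R < (1 / 2) * Real.logb 2 (1 + P / σ2)) := by
  have h2 : (2 : ℝ) ^ (-(2 * R)) = Real.exp (-(2 * R * Real.log 2)) := by
    rw [Real.rpow_def_of_pos (by norm_num)]
    ring_nf
  constructor
  · have := (Real.tendsto_one_add_div_pow_exp (-(2 * R * Real.log 2))).const_mul (σ2 + P)
    rw [← h2] at this
    convert this using 2 with B
    ring_nf
  · rw [h2]
    have hlt : Real.exp (-(2 * R * Real.log 2)) < 1 := by
      have hlog2 : 0 < Real.log 2 := Real.log_pos (by norm_num)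
      have : Real.exp (-(2 * R * Real.log 2)) < Real.exp 0 :=
        Real.exp_lt_exp.mpr (by nlinarith)
      simpa using this
    have hpos : (0:ℝ) < Real.exp (-(2 * R * Real.log 2)) := Real.exp_pos _
    rw [Real.logb]
    have key : (σ2 + P) * (1 - Real.exp (-(2 * R * Real.log 2))) < P ↔
        σ2 < (σ2 + P) * Real.exp (-(2 * R * Real.log 2)) := by
      constructor <;> intro h <;> nlinarith
    rw [key]
    have h1P : 1 + P / σ2 = (σ2 + P) / σ2 := by field_simp
    rw [h1P]
    rw [show (1:ℝ)/2 * (Real.log ((σ2 + P)/σ2) / Real.log 2)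
        = Real.log ((σ2 + P)/σ2) / (2 * Real.log 2) by ring]
    have hlog2 : 0 < Real.log 2 := Real.log_pos (by norm_num)
    rw [lt_div_iff₀ (by positivity)]
    constructor
    · intro h
      have := Real.log_lt_log hσ2 h
      rw [Real.log_mul (by positivity) (ne_of_gt hpos), Real.log_exp] at this
      have hd : Real.log σ2 - Real.log ((σ2 + P)/σ2) < -(2*R*Real.log 2) + Real.log (σ2+P) - Real.log ((σ2+P)/σ2) := by linarith
      rw [Real.log_div (by positivity) (ne_of_gt hσ2)] at hd ⊢
      linarith
    · intro h
      have h' : Real.log σ2 < Real.log ((σ2+P) * Real.exp (-(2*R*Real.log 2))) := by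
        rw [Real.log_mul (by positivity) (ne_of_gt hpos), Real.log_exp,
          Real.log_div (by positivity) (ne_of_gt hσ2)] at *
        linarith
      exact (Real.log_lt_log_iff hσ2 (by positivity)).mp h'
end
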